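/- Two distinct BSCCs of a quantum Markov chain intersect only in the zero vector: if X and Y are both BSCCs of (H, E) and X ≠ Y, then X ∩ Y = {0}. -/

import Mathlib

open Matrix Filter Topology
open scoped ComplexOrder

/-- The matrix of the orthogonal projection onto a subspace `X`. -/
noncomputable def projMat {d : ℕ} (X : Submodule ℂ (EuclideanSpace ℂ (Fin d))) :
    Matrix (Fin d) (Fin d) ℂ :=
  Matrix.toEuclideanLin.symm ((X.subtypeL.comp (Submodule.orthogonalProjectionOnto X)).toLinearMap)

/-- The support of an operator: the range of the associated linear map. -/
noncomputable def matSupp {d : ℕ} (A : Matrix (Fin d) (Fin d) ℂ) :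
    Submodule ℂ (EuclideanSpace ℂ (Fin d)) :=
  LinearMap.range (Matrix.toEuclideanLin A)

/-- The outer product `|v⟩⟨v|`. -/
noncomputable def outer {d : ℕ} (v : EuclideanSpace ℂ (Fin d)) : Matrix (Fin d) (Fin d) ℂ :=
  fun i j => v i * star (v j)

/-- The completely positive map `A ↦ ∑ i, E i * A * (E i)†` given by Kraus operators `E`. -/
noncomputable def krausMap {d m : ℕ} (E : Fin m → Matrix (Fin d) (Fin d) ℂ)
    (A : Matrix (Fin d) (Fin d) ℂ) : Matrix (Fin d) (Fin d) ℂ :=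
  ∑ i, E i * A * (E i)ᴴ

/-- The reachable space of a state `ρ`: the join of the supports of all iterates. -/
noncomputable def Reach {d m : ℕ} (E : Fin m → Matrix (Fin d) (Fin d) ℂ)
    (ρ : Matrix (Fin d) (Fin d) ℂ) : Submodule ℂ (EuclideanSpace ℂ (Fin d)) :=
  ⨆ n : ℕ, matSupp ((krausMap E)^[n] ρ)

/-- A BSCC: a nonzero invariant subspace `B` such that the reachable space of every
nonzero vector of `B` is exactly `B`. -/
noncomputable def IsBSCC {d m : ℕ} (E : Fin m → Matrix (Fin d) (Fin d) ℂ)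
    (B : Submodule ℂ (EuclideanSpace ℂ (Fin d))) : Prop :=
  B ≠ ⊥ ∧
  (∀ ρ : Matrix (Fin d) (Fin d) ℂ, ρ.PosSemidef → matSupp ρ ≤ B →
      matSupp (krausMap E ρ) ≤ B) ∧
  (∀ v : EuclideanSpace ℂ (Fin d), v ∈ B → v ≠ 0 → Reach E (outer v) = B)

theorem IsBSCC.eq_of_mem {d m : ℕ} {E : Fin m → Matrix (Fin d) (Fin d) ℂ}
    {X Y : Submodule ℂ (EuclideanSpace ℂ (Fin d))} (hX : IsBSCC E X) (hY : IsBSCC E Y)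
    {v : EuclideanSpace ℂ (Fin d)} (hvX : v ∈ X) (hvY : v ∈ Y) (hv : v ≠ 0) : X = Y :=
  (hX.2.2 v hvX hv).symm.trans (hY.2.2 v hvY hv)

theorem stmt9_general {d m : ℕ} (E : Fin m → Matrix (Fin d) (Fin d) ℂ)
    (X Y : Submodule ℂ (EuclideanSpace ℂ (Fin d))) (hX : IsBSCC E X) (hY : IsBSCC E Y) (hne : X ≠ Y) :
    X ⊓ Y = ⊥ :=
  (Submodule.eq_bot_iff _).2 fun _ ⟨hvX, hvY⟩ =>
    by_contra fun hv => hne (hX.eq_of_mem hY hvX hvY hv)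

/-- Two distinct BSCCs intersect only in the zero vector. -/
theorem stmt9 {d m : ℕ} (E : Fin m → Matrix (Fin d) (Fin d) ℂ)
    (hE : ∑ i, (E i)ᴴ * E i = 1)
    (X Y : Submodule ℂ (EuclideanSpace ℂ (Fin d))) (hX : IsBSCC E X) (hY : IsBSCC E Y) (hne : X ≠ Y) :
    X ⊓ Y = ⊥ :=
  stmt9_general E X Y hX hY hne
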